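/- Strong propositional union closed logic PU⁺ characterizes the set of all union closed team properties: for every finite index set N = {i₁,…,iₙ}, (a) for every formula φ in the language of PU⁺ with variables among {p_i : i∈N}, the set {Y ⊆ 2^N : Y ⊨ φ} is closed under unions of nonempty subfamilies; and (b) for every set P ⊆ 𝒫(2^N) of teams on N with ⋃𝒳 ∈ P for every nonempty 𝒳 ⊆ P, there is a formula φ in the language of PU⁺ with variables among {p_i : i∈N} such that for every team Y on N, Y ⊨ φ if and only if Y ∈ P. -/

import Mathlib

/-- Formulas of full propositional team logic (FPT), with propositional
variables indexed by a type `V`. -/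
inductive PTForm (V : Type) : Type where
  | pos : V → PTForm V
  | neg : V → PTForm V
  | bot : PTForm V
  | ne : PTForm V
  | dep : List V → V → PTForm V
  | indep : List V → List V → PTForm V
  | incl : List V → List V → PTForm V
  | and : PTForm V → PTForm V → PTForm V
  | tensor : PTForm V → PTForm V → PTForm V
  | nsor : PTForm V → PTForm V → PTForm V
  | bor : PTForm V → PTForm V → PTForm V

/-- Team semantics of full propositional team logic.  A valuation is a
function `V → Bool` and a team is a set of valuations. -/
def PTSat {V : Type} (X : Set (V → Bool)) : PTForm V → Prop
  | .pos i => ∀ s ∈ X, s i = true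
  | .neg i => ∀ s ∈ X, s i = false
  | .bot => X = ∅
  | .ne => X ≠ ∅
  | .dep xs y => ∀ s ∈ X, ∀ s' ∈ X, (∀ i ∈ xs, s i = s' i) → s y = s' y
  | .indep xs ys =>
      ∀ s ∈ X, ∀ s' ∈ X, ∃ s'' ∈ X,
        (∀ i ∈ xs, s'' i = s i) ∧ (∀ j ∈ ys, s'' j = s' j)
  | .incl xs ys => ∀ s ∈ X, ∃ s' ∈ X, ∀ p ∈ List.zip xs ys, s p.1 = s' p.2
  | .and φ ψ => PTSat X φ ∧ PTSat X ψ
  | .tensor φ ψ => ∃ Y Z, X = Y ∪ Z ∧ PTSat Y φ ∧ PTSat Z ψ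
  | .nsor φ ψ =>
      X = ∅ ∨ ∃ Y Z, X = Y ∪ Z ∧ Y.Nonempty ∧ Z.Nonempty ∧ PTSat Y φ ∧ PTSat Z ψ
  | .bor φ ψ => PTSat X φ ∨ PTSat X ψ

/-- The set of propositional variables occurring in a formula. -/
def PTForm.vars {V : Type} : PTForm V → Set V
  | .pos i => {i}
  | .neg i => {i}
  | .bot => ∅
  | .ne => ∅
  | .dep xs y => {i | i ∈ xs} ∪ {y}
  | .indep xs ys => {i | i ∈ xs} ∪ {j | j ∈ ys}
  | .incl xs ys => {i | i ∈ xs} ∪ {j | j ∈ ys}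
  | .and φ ψ => φ.vars ∪ ψ.vars
  | .tensor φ ψ => φ.vars ∪ ψ.vars
  | .nsor φ ψ => φ.vars ∪ ψ.vars
  | .bor φ ψ => φ.vars ∪ ψ.vars

/-- The formula does not contain the atom NE. -/
def PTForm.NEfree {V : Type} : PTForm V → Prop
  | .ne => False
  | .and φ ψ => φ.NEfree ∧ ψ.NEfree
  | .tensor φ ψ => φ.NEfree ∧ ψ.NEfree
  | .nsor φ ψ => φ.NEfree ∧ ψ.NEfree
  | .bor φ ψ => φ.NEfree ∧ ψ.NEfree
  | _ => True

/-- Classical formulas: built from `pᵢ`, `¬pᵢ`, `⊥` using only `∧` and `⊗`. -/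
inductive IsClassical {V : Type} : PTForm V → Prop where
  | pos (i : V) : IsClassical (.pos i)
  | neg (i : V) : IsClassical (.neg i)
  | bot : IsClassical .bot
  | and : ∀ {φ ψ}, IsClassical φ → IsClassical ψ → IsClassical (.and φ ψ)
  | tensor : ∀ {φ ψ}, IsClassical φ → IsClassical ψ → IsClassical (.tensor φ ψ)

/-- The language of strong propositional team logic PT⁺:
atoms `pᵢ`, `¬pᵢ`, `⊥`, `NE` and connectives `∧`, `⊗`, `∨`. -/
inductive IsPTPlus {V : Type} : PTForm V → Prop where
  | pos (i : V) : IsPTPlus (.pos i)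
  | neg (i : V) : IsPTPlus (.neg i)
  | bot : IsPTPlus .bot
  | ne : IsPTPlus .ne
  | and : ∀ {φ ψ}, IsPTPlus φ → IsPTPlus ψ → IsPTPlus (.and φ ψ)
  | tensor : ∀ {φ ψ}, IsPTPlus φ → IsPTPlus ψ → IsPTPlus (.tensor φ ψ)
  | bor : ∀ {φ ψ}, IsPTPlus φ → IsPTPlus ψ → IsPTPlus (.bor φ ψ)

/-- The language of propositional team logic PT:
atoms `pᵢ`, `¬pᵢ`, `⊥` and connectives `∧`, `⊛`, `∨`. -/
inductive IsPT {V : Type} : PTForm V → Prop where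
  | pos (i : V) : IsPT (.pos i)
  | neg (i : V) : IsPT (.neg i)
  | bot : IsPT .bot
  | and : ∀ {φ ψ}, IsPT φ → IsPT ψ → IsPT (.and φ ψ)
  | nsor : ∀ {φ ψ}, IsPT φ → IsPT ψ → IsPT (.nsor φ ψ)
  | bor : ∀ {φ ψ}, IsPT φ → IsPT ψ → IsPT (.bor φ ψ)

/-- The language of propositional union closed logic PU:
atoms `pᵢ`, `¬pᵢ`, `⊥` and connectives `∧`, `⊗`, `⊛`. -/
inductive IsPU {V : Type} : PTForm V → Prop where
  | pos (i : V) : IsPU (.pos i)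
  | neg (i : V) : IsPU (.neg i)
  | bot : IsPU .bot
  | and : ∀ {φ ψ}, IsPU φ → IsPU ψ → IsPU (.and φ ψ)
  | tensor : ∀ {φ ψ}, IsPU φ → IsPU ψ → IsPU (.tensor φ ψ)
  | nsor : ∀ {φ ψ}, IsPU φ → IsPU ψ → IsPU (.nsor φ ψ)

/-- The language of strong propositional union closed logic PU⁺:
atoms `pᵢ`, `¬pᵢ`, `⊥`, `NE` and connectives `∧`, `⊗`, `⊛`. -/
inductive IsPUPlus {V : Type} : PTForm V → Prop where
  | pos (i : V) : IsPUPlus (.pos i)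
  | neg (i : V) : IsPUPlus (.neg i)
  | bot : IsPUPlus .bot
  | ne : IsPUPlus .ne
  | and : ∀ {φ ψ}, IsPUPlus φ → IsPUPlus ψ → IsPUPlus (.and φ ψ)
  | tensor : ∀ {φ ψ}, IsPUPlus φ → IsPUPlus ψ → IsPUPlus (.tensor φ ψ)
  | nsor : ∀ {φ ψ}, IsPUPlus φ → IsPUPlus ψ → IsPUPlus (.nsor φ ψ)

/-- The atom-free team language: atoms `pᵢ`, `¬pᵢ`, `⊥`, `NE` and
connectives `∧`, `⊗`, `⊛`, `∨` (no dependence/independence/inclusion atoms). -/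
inductive IsAtomFree {V : Type} : PTForm V → Prop where
  | pos (i : V) : IsAtomFree (.pos i)
  | neg (i : V) : IsAtomFree (.neg i)
  | bot : IsAtomFree .bot
  | ne : IsAtomFree .ne
  | and : ∀ {φ ψ}, IsAtomFree φ → IsAtomFree ψ → IsAtomFree (.and φ ψ)
  | tensor : ∀ {φ ψ}, IsAtomFree φ → IsAtomFree ψ → IsAtomFree (.tensor φ ψ)
  | nsor : ∀ {φ ψ}, IsAtomFree φ → IsAtomFree ψ → IsAtomFree (.nsor φ ψ)
  | bor : ∀ {φ ψ}, IsAtomFree φ → IsAtomFree ψ → IsAtomFree (.bor φ ψ)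

/-- The literal `pᵢ^{s(i)}`, i.e. `pᵢ` if `s i = 1` and `¬pᵢ` if `s i = 0`. -/
def PTlit {V : Type} (s : V → Bool) (i : V) : PTForm V :=
  if s i then .pos i else .neg i

/-- Conjunction of a nonempty list headed by the first argument. -/
def PTandAux {V : Type} : PTForm V → List (PTForm V) → PTForm V
  | φ, [] => φ
  | φ, ψ :: l => .and φ (PTandAux ψ l)

/-- Conjunction of a list of formulas (only used on nonempty lists). -/
def PTandList {V : Type} : List (PTForm V) → PTForm V
  | [] => .bot
  | φ :: l => PTandAux φ l

/-- The formula `p_{i₁}^{s(i₁)} ∧ … ∧ p_{iₙ}^{s(iₙ)}` describing the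
valuation `s`, where `{i₁, …, iₙ}` enumerates all of `V`. -/
noncomputable def PTdescr {V : Type} [Fintype V] (s : V → Bool) : PTForm V :=
  PTandList ((Finset.univ : Finset V).toList.map (PTlit s))

/-- Tensor disjunction `⊗` of a list of formulas; the empty tensor
disjunction is `⊥`. -/
def PTtensorList {V : Type} (l : List (PTForm V)) : PTForm V :=
  l.foldr PTForm.tensor PTForm.bot

/-- Nonempty disjunction `⊛` of a nonempty list headed by the first argument. -/
def PTnsorAux {V : Type} : PTForm V → List (PTForm V) → PTForm V
  | φ, [] => φ
  | φ, ψ :: l => .nsor φ (PTnsorAux ψ l)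

/-- Nonempty disjunction `⊛` of a list of formulas; the empty nonempty
disjunction is `⊥`. -/
def PTnsorList {V : Type} : List (PTForm V) → PTForm V
  | [] => .bot
  | φ :: l => PTnsorAux φ l

/-- Boolean disjunction `∨` of a list of formulas; the empty Boolean
disjunction is `⊥ ∧ NE`. -/
def PTborList {V : Type} (l : List (PTForm V)) : PTForm V :=
  l.foldr PTForm.bor (PTForm.and PTForm.bot PTForm.ne)

/-- The formula `Θ_X := ⊗_{s∈X} (p_{i₁}^{s(i₁)} ∧ … ∧ p_{iₙ}^{s(iₙ)})`. -/
noncomputable def PTtheta {V : Type} [Fintype V] (X : Finset (V → Bool)) : PTForm V :=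
  PTtensorList (X.toList.map PTdescr)

/-- The formula `Θ*_X := ⊗_{s∈X} (p_{i₁}^{s(i₁)} ∧ … ∧ p_{iₙ}^{s(iₙ)} ∧ NE)`. -/
noncomputable def PTthetaStar {V : Type} [Fintype V] (X : Finset (V → Bool)) : PTForm V :=
  PTtensorList (X.toList.map (fun s => .and (PTdescr s) .ne))

/-- The formula `Θ**_X := ⊛_{s∈X} (p_{i₁}^{s(i₁)} ∧ … ∧ p_{iₙ}^{s(iₙ)})`. -/
noncomputable def PTthetaSS {V : Type} [Fintype V] (X : Finset (V → Bool)) : PTForm V :=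
  PTnsorList (X.toList.map PTdescr)

/-- Logical consequence: every team satisfying all formulas of `Γ`
satisfies `φ`. -/
def PTEntails {V : Type} (Γ : Set (PTForm V)) (φ : PTForm V) : Prop :=
  ∀ X : Set (V → Bool), (∀ ψ ∈ Γ, PTSat X ψ) → PTSat X φ

/-- A team property is flat if a team is in it iff all its singleton
subteams are. -/
def IsFlat {V : Type} (P : Set (Set (V → Bool))) : Prop :=
  ∀ X : Set (V → Bool), X ∈ P ↔ ∀ s ∈ X, ({s} : Set (V → Bool)) ∈ P

/-- A team property is union closed if it is closed under unions of
nonempty subfamilies. -/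
def IsUnionClosed {V : Type} (P : Set (Set (V → Bool))) : Prop :=
  ∀ 𝒳 ⊆ P, 𝒳.Nonempty → ⋃₀ 𝒳 ∈ P

/-- The syntactic De Morgan negation of a classical formula. -/
def PTdeMorgan : PTForm ℕ → PTForm ℕ
  | .pos i => .neg i
  | .neg i => .pos i
  | .bot => .tensor (.pos 0) (.neg 0)
  | .and φ ψ => .tensor (PTdeMorgan φ) (PTdeMorgan ψ)
  | .tensor φ ψ => .and (PTdeMorgan φ) (PTdeMorgan ψ)
  | φ => φ

/-- Application of a substitution `σ` (assigning a formula to each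
propositional variable) to a formula of the atom-free team language. -/
def PTsubst (σ : ℕ → PTForm ℕ) : PTForm ℕ → PTForm ℕ
  | .pos i => σ i
  | .neg i => PTdeMorgan (σ i)
  | .and φ ψ => .and (PTsubst σ φ) (PTsubst σ ψ)
  | .tensor φ ψ => .tensor (PTsubst σ φ) (PTsubst σ ψ)
  | .nsor φ ψ => .nsor (PTsubst σ φ) (PTsubst σ ψ)
  | .bor φ ψ => .bor (PTsubst σ φ) (PTsubst σ ψ)
  | φ => φ

open Classical in
/-- The valuation `s_σ`, with `s_σ(i) = 1` iff `{s} ⊨ σ(pᵢ)`. -/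
noncomputable def PTvalSubst (σ : ℕ → PTForm ℕ) (s : ℕ → Bool) : ℕ → Bool :=
  fun i => if PTSat {s} (σ i) then true else false

/-!
Each connective of PU⁺ preserves union closure: `∧` intersects the defined properties, `⊗`
takes pairwise unions, and `⊛` takes pairwise unions of nonempty members and adds `∅`.
Conversely, `Θ*_X` defines exactly `{X}`, so `α_X := Θ*_X ⊛ Θ*_X` defines `{∅, X}`, and the
tensor of `α_X` over all `X ∈ P` defines the unions of all subfamilies of `P`; for union closed
`P` these are `P ∪ {∅}`, and conjoining `NE` removes `∅` when `∅ ∉ P`.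
-/

section UnionClosed

variable {V : Type}

theorem isUnionClosed_setOf_subset (S : Set (V → Bool)) : IsUnionClosed {X | X ⊆ S} :=
  fun _ h𝒳 _ => Set.sUnion_subset h𝒳

theorem isUnionClosed_setOf_nonempty : IsUnionClosed {X : Set (V → Bool) | X.Nonempty} := by
  rintro 𝒳 h𝒳 ⟨X, hX⟩
  exact (h𝒳 hX).mono (Set.subset_sUnion_of_mem hX)

theorem IsUnionClosed.inter {P Q : Set (Set (V → Bool))} (hP : IsUnionClosed P)
    (hQ : IsUnionClosed Q) : IsUnionClosed (P ∩ Q) :=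
  fun 𝒳 h𝒳 hne =>
    ⟨hP 𝒳 (h𝒳.trans Set.inter_subset_left) hne, hQ 𝒳 (h𝒳.trans Set.inter_subset_right) hne⟩

theorem IsUnionClosed.image2_union {P Q : Set (Set (V → Bool))} (hP : IsUnionClosed P)
    (hQ : IsUnionClosed Q) : IsUnionClosed (Set.image2 (· ∪ ·) P Q) := by
  intro 𝒳 h𝒳 hne
  choose! Y hY Z hZ hYZ using h𝒳
  refine ⟨⋃₀ (Y '' 𝒳), hP _ (Set.image_subset_iff.2 hY) (hne.image Y),
    ⋃₀ (Z '' 𝒳), hQ _ (Set.image_subset_iff.2 hZ) (hne.image Z), ?_⟩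
  rw [Set.sUnion_image, Set.sUnion_image, Set.sUnion_eq_biUnion, ← Set.iUnion₂_congr hYZ]
  simp only [Set.iUnion_union_distrib]

theorem IsUnionClosed.sdiff_singleton_empty {P : Set (Set (V → Bool))} (hP : IsUnionClosed P) :
    IsUnionClosed (P \ {∅}) := by
  rintro 𝒳 h𝒳 ⟨X, hX⟩
  refine Set.mem_sdiff_singleton_empty.2 ⟨hP 𝒳 (h𝒳.trans Set.sdiff_subset) ⟨X, hX⟩, ?_⟩
  exact (Set.mem_sdiff_singleton_empty.1 (h𝒳 hX)).2.mono (Set.subset_sUnion_of_mem hX)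

theorem IsUnionClosed.insert_empty {P : Set (Set (V → Bool))} (hP : IsUnionClosed P) :
    IsUnionClosed (insert ∅ P) := by
  intro 𝒳 h𝒳 _
  rw [← Set.sUnion_sdiff_singleton_empty]
  rcases (𝒳 \ {∅}).eq_empty_or_nonempty with h | h
  · exact Or.inl (by rw [h, Set.sUnion_empty])
  · refine Or.inr (hP _ ?_ h)
    rintro X ⟨hX, hX_ne⟩
    exact (h𝒳 hX).resolve_left hX_ne

theorem setOf_sat_tensor (φ ψ : PTForm V) :
    {X | PTSat X (.tensor φ ψ)} = Set.image2 (· ∪ ·) {X | PTSat X φ} {X | PTSat X ψ} := by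
  ext X
  simp only [PTSat, Set.mem_ofPred_eq, Set.mem_image2]
  aesop

theorem setOf_sat_nsor (φ ψ : PTForm V) :
    {X | PTSat X (.nsor φ ψ)} =
      insert ∅ (Set.image2 (· ∪ ·) ({X | PTSat X φ} \ {∅}) ({X | PTSat X ψ} \ {∅})) := by
  ext X
  simp only [PTSat, Set.mem_ofPred_eq, Set.mem_insert_iff, Set.mem_image2,
    Set.mem_sdiff_singleton_empty]
  aesop

theorem IsPUPlus.isUnionClosed {φ : PTForm V} (h : IsPUPlus φ) :
    IsUnionClosed {X | PTSat X φ} := by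
  induction h with
  | pos i => exact isUnionClosed_setOf_subset {s | s i = true}
  | neg i => exact isUnionClosed_setOf_subset {s | s i = false}
  | bot => simpa [PTSat] using isUnionClosed_setOf_subset (∅ : Set (V → Bool))
  | ne => simpa [PTSat, Set.nonempty_iff_ne_empty] using isUnionClosed_setOf_nonempty (V := V)
  | and _ _ hφ hψ => exact hφ.inter hψ
  | tensor _ _ hφ hψ => rw [setOf_sat_tensor]; exact hφ.image2_union hψ
  | nsor _ _ hφ hψ =>
    rw [setOf_sat_nsor]
    exact (hφ.sdiff_singleton_empty.image2_union hψ.sdiff_singleton_empty).insert_empty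

end UnionClosed

theorem Set.image2_union_pair_empty_sUnion_powerset {α : Type*} (A : Set α) (S : Set (Set α)) :
    Set.image2 (· ∪ ·) {∅, A} (Set.sUnion '' 𝒫 S) = Set.sUnion '' 𝒫 (insert A S) := by
  ext Y
  constructor
  · rintro ⟨B, rfl | rfl, _, ⟨𝒴, h𝒴, rfl⟩, rfl⟩
    · exact ⟨𝒴, h𝒴.trans (Set.subset_insert A S), (Set.empty_union _).symm⟩
    · exact ⟨insert B 𝒴, Set.insert_subset_insert h𝒴, Set.sUnion_insert B 𝒴⟩
  · rintro ⟨𝒴, h𝒴, rfl⟩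
    refine ⟨⋃₀ (𝒴 ∩ {A}), ?_, ⋃₀ (𝒴 \ {A}), ⟨𝒴 \ {A}, ?_, rfl⟩, ?_⟩
    · rcases Set.subset_singleton_iff_eq.1 (Set.inter_subset_right (s := 𝒴) (t := {A}))
        with h | h <;> simp [h]
    · exact Set.sdiff_subset_iff.2 (by rwa [Set.singleton_union])
    · show _ ∪ _ = _
      rw [← Set.sUnion_union, Set.inter_union_sdiff]

section Definability

variable {V : Type}

theorem IsUnionClosed.sUnion_image_powerset {P : Set (Set (V → Bool))} (hP : IsUnionClosed P) :
    Set.sUnion '' 𝒫 P = insert ∅ P := by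
  ext Y
  constructor
  · rintro ⟨𝒴, h𝒴, rfl⟩
    rcases 𝒴.eq_empty_or_nonempty with rfl | hne
    · exact Or.inl Set.sUnion_empty
    · exact Or.inr (hP 𝒴 h𝒴 hne)
  · rintro (rfl | hY)
    · exact ⟨∅, Set.empty_subset P, Set.sUnion_empty⟩
    · exact ⟨{Y}, Set.singleton_subset_iff.2 hY, Set.sUnion_singleton Y⟩

theorem sat_lit_iff (s : V → Bool) (i : V) (Y : Set (V → Bool)) :
    PTSat Y (PTlit s i) ↔ ∀ t ∈ Y, t i = s i := by
  unfold PTlit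
  cases h : s i <;> simp [PTSat]

theorem sat_andAux_iff (Y : Set (V → Bool)) (φ : PTForm V) (l : List (PTForm V)) :
    PTSat Y (PTandAux φ l) ↔ ∀ ψ ∈ φ :: l, PTSat Y ψ := by
  induction l generalizing φ with
  | nil => simp [PTandAux]
  | cons ψ l ih => simp [PTandAux, PTSat, ih]

-- `PTandList [] = ⊥`, so over an empty `V` the description of the unique valuation is `⊥`.
theorem sat_descr_iff [Fintype V] [Nonempty V] (s : V → Bool) (Y : Set (V → Bool)) :
    PTSat Y (PTdescr s) ↔ Y ⊆ {s} := by
  obtain ⟨i, l, hl⟩ : ∃ i l, (Finset.univ : Finset V).toList = i :: l :=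
    List.exists_cons_of_ne_nil (Finset.toList_eq_nil.not.2 Finset.univ_nonempty.ne_empty)
  rw [PTdescr, hl, List.map_cons, PTandList, sat_andAux_iff, ← List.map_cons, ← hl]
  simp [sat_lit_iff, Set.subset_def, funext_iff]
  tauto

theorem sat_descr_and_ne_iff [Fintype V] [Nonempty V] (s : V → Bool) (Y : Set (V → Bool)) :
    PTSat Y (.and (PTdescr s) .ne) ↔ Y = {s} := by
  show PTSat Y (PTdescr s) ∧ Y ≠ ∅ ↔ _
  rw [sat_descr_iff, Set.subset_singleton_iff_eq]
  constructor
  · rintro ⟨h | h, hY⟩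
    exacts [absurd h hY, h]
  · rintro rfl
    exact ⟨Or.inr rfl, Set.singleton_ne_empty s⟩

theorem sat_tensorList_descr_and_ne_iff [Fintype V] [Nonempty V] (l : List (V → Bool))
    (Y : Set (V → Bool)) :
    PTSat Y (PTtensorList (l.map fun s => .and (PTdescr s) .ne)) ↔ Y = {t | t ∈ l} := by
  induction l generalizing Y with
  | nil => simp [PTtensorList, PTSat]
  | cons s l ih =>
    show (∃ Y₁ Y₂, Y = Y₁ ∪ Y₂ ∧ _ ∧ PTSat Y₂ (PTtensorList _)) ↔ _
    simp only [sat_descr_and_ne_iff, ih, List.setOfPred_mem_cons, Set.insert_eq]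
    exact ⟨fun ⟨_, _, h, h₁, h₂⟩ => h₁ ▸ h₂ ▸ h, fun h => ⟨_, _, h, rfl, rfl⟩⟩

theorem sat_thetaStar_iff [Fintype V] [Nonempty V] (X : Finset (V → Bool)) (Y : Set (V → Bool)) :
    PTSat Y (PTthetaStar X) ↔ Y = X := by
  rw [PTthetaStar, sat_tensorList_descr_and_ne_iff]
  simp only [Finset.mem_toList, Finset.setOfPred_mem]

noncomputable def PTalpha [Fintype V] (X : Finset (V → Bool)) : PTForm V :=
  .nsor (PTthetaStar X) (PTthetaStar X)

theorem setOf_sat_alpha [Fintype V] [Nonempty V] (X : Finset (V → Bool)) :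
    {Y | PTSat Y (PTalpha X)} = {∅, ↑X} := by
  rw [PTalpha, setOf_sat_nsor]
  ext Y
  simp only [Set.mem_insert_iff, Set.mem_image2, Set.mem_sdiff_singleton_empty,
    Set.mem_ofPred_eq, sat_thetaStar_iff, Set.mem_singleton_iff]
  constructor
  · rintro (h | ⟨_, ⟨rfl, -⟩, _, ⟨rfl, -⟩, rfl⟩)
    exacts [Or.inl h, Or.inr (Set.union_self _)]
  · rintro (h | rfl)
    · exact Or.inl h
    · rcases (X : Set (V → Bool)).eq_empty_or_nonempty with h | h
      · exact Or.inl h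
      · exact Or.inr ⟨_, ⟨rfl, h⟩, _, ⟨rfl, h⟩, Set.union_self _⟩

theorem setOf_sat_tensorList_alpha [Fintype V] [Nonempty V] (L : List (Finset (V → Bool))) :
    {Y | PTSat Y (PTtensorList (L.map PTalpha))} = Set.sUnion '' 𝒫 ((↑) '' {X | X ∈ L}) := by
  induction L with
  | nil => simp [PTtensorList, PTSat]
  | cons X L ih =>
    show {Y | PTSat Y (.tensor (PTalpha X) (PTtensorList (L.map PTalpha)))} = _
    rw [setOf_sat_tensor, setOf_sat_alpha, ih, List.setOfPred_mem_cons, Set.image_insert_eq,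
      Set.image2_union_pair_empty_sUnion_powerset]

open Classical in
noncomputable def PTunionsOf [Fintype V] (P : Set (Set (V → Bool))) : PTForm V :=
  PTtensorList ((Finset.univ.filter fun X : Finset (V → Bool) => ↑X ∈ P).toList.map PTalpha)

theorem setOf_sat_unionsOf [Fintype V] [Nonempty V] (P : Set (Set (V → Bool))) :
    {Y | PTSat Y (PTunionsOf P)} = Set.sUnion '' 𝒫 P := by
  classical
  rw [PTunionsOf, setOf_sat_tensorList_alpha]
  congr
  ext Y
  simp only [Set.mem_image, Set.mem_ofPred_eq, Finset.mem_toList, Finset.mem_filter,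
    Finset.mem_univ, true_and]
  exact ⟨fun ⟨X, hX, hXY⟩ => hXY ▸ hX,
    fun hY => ⟨(Set.toFinite Y).toFinset, by simpa using hY, by simp⟩⟩

theorem IsPUPlus.andAux {φ : PTForm V} {l : List (PTForm V)} (hφ : IsPUPlus φ)
    (hl : ∀ ψ ∈ l, IsPUPlus ψ) : IsPUPlus (PTandAux φ l) := by
  induction l generalizing φ with
  | nil => exact hφ
  | cons ψ l ih => exact .and hφ (ih (hl ψ List.mem_cons_self) fun χ hχ => hl χ (.tail ψ hχ))

theorem IsPUPlus.andList {l : List (PTForm V)} (hl : ∀ ψ ∈ l, IsPUPlus ψ) :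
    IsPUPlus (PTandList l) := by
  cases l with
  | nil => exact .bot
  | cons φ l => exact .andAux (hl φ List.mem_cons_self) fun ψ hψ => hl ψ (.tail φ hψ)

theorem IsPUPlus.tensorList {l : List (PTForm V)} (hl : ∀ ψ ∈ l, IsPUPlus ψ) :
    IsPUPlus (PTtensorList l) := by
  induction l with
  | nil => exact .bot
  | cons φ l ih => exact .tensor (hl φ List.mem_cons_self) (ih fun ψ hψ => hl ψ (.tail φ hψ))

theorem IsPUPlus.descr [Fintype V] (s : V → Bool) : IsPUPlus (PTdescr s) := by
  refine .andList fun ψ hψ => ?_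
  obtain ⟨i, -, rfl⟩ := List.mem_map.1 hψ
  unfold PTlit
  split
  exacts [.pos i, .neg i]

theorem IsPUPlus.unionsOf [Fintype V] (P : Set (Set (V → Bool))) : IsPUPlus (PTunionsOf P) := by
  refine .tensorList fun ψ hψ => ?_
  obtain ⟨X, -, rfl⟩ := List.mem_map.1 hψ
  have hΘ : IsPUPlus (PTthetaStar X) := .tensorList fun χ hχ => by
    obtain ⟨s, -, rfl⟩ := List.mem_map.1 hχ
    exact .and (.descr s) .ne
  exact .nsor hΘ hΘ

theorem IsUnionClosed.exists_isPUPlus_sat_iff [Fintype V] [Nonempty V]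
    {P : Set (Set (V → Bool))} (hP : IsUnionClosed P) :
    ∃ φ : PTForm V, IsPUPlus φ ∧ ∀ Y, PTSat Y φ ↔ Y ∈ P := by
  have hsat : ∀ Y, PTSat Y (PTunionsOf P) ↔ Y ∈ insert ∅ P := fun Y => by
    rw [← hP.sUnion_image_powerset, ← setOf_sat_unionsOf]
    rfl
  by_cases hP_empty : ∅ ∈ P
  · refine ⟨PTunionsOf P, .unionsOf P, fun Y => ?_⟩
    rw [hsat, Set.insert_eq_of_mem hP_empty]
  · refine ⟨.and (PTunionsOf P) .ne, .and (.unionsOf P) .ne, fun Y => ?_⟩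
    show PTSat Y _ ∧ Y ≠ ∅ ↔ _
    rw [hsat, Set.mem_insert_iff]
    exact ⟨fun ⟨h, hY⟩ => h.resolve_left hY, fun h => ⟨Or.inr h, by rintro rfl; exact hP_empty h⟩⟩

end Definability

/-- **PU⁺ characterizes the union closed team properties.**  (a) Every PU⁺
formula defines a union closed team property; (b) every union closed team
property is definable by a PU⁺ formula. -/
theorem puplus_characterizes_union_closed (V : Type) [Fintype V] [Nonempty V] :
    (∀ φ : PTForm V, IsPUPlus φ →
      IsUnionClosed {X : Set (V → Bool) | PTSat X φ}) ∧
    (∀ P : Set (Set (V → Bool)), IsUnionClosed P →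
      ∃ φ : PTForm V, IsPUPlus φ ∧
        ∀ Y : Set (V → Bool), PTSat Y φ ↔ Y ∈ P) :=
  ⟨fun _ hφ => hφ.isUnionClosed, fun _ hP => hP.exists_isPUPlus_sat_iff⟩
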